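/- Let K be a number field whose distinguished infinite place w₀ is real. Then a pair (𝔟, t), with 𝔟 a nonzero fractional ideal of 𝒪_K and t ∈ ℝⁿ, is an f-representation if and only if B(𝔟, (t, 0)) = {−1, 0, 1}. -/

import Mathlib

/-! Minimality of `1` for `≼` gives `w₀(1) ≤ w₀(h)` for every nonzero `h` in the box, while the box
itself gives `w₀(h) ≤ 1`; so `w₀(h) = 1`, and since `w₀` is real this means `h = ±1`. Conversely
`±1` have the same absolute values everywhere, so `1 ≼ -1`. -/

open NumberField
open scoped nonZeroDivisors

/-- Lexicographic comparison of real tuples: `a ≤ₗₑₓ b`. -/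
def lexLe {m : ℕ} (a b : Fin m → ℝ) : Prop :=
  a = b ∨ ∃ i : Fin m, a i < b i ∧ ∀ j : Fin m, j < i → a j = b j

/-- The vector of absolute values of `h` at the infinite places, the distinguished place `w₀`
first. -/
def absVec {K : Type*} [Field K] [NumberField K] {n : ℕ}
    (w₀ : InfinitePlace K) (w : Fin n → InfinitePlace K) (h : K) : Fin (n + 1) → ℝ :=
  Fin.cons (w₀ h) (fun i => w i h)

/-- The total preorder `≼` on `K^*`: `h ≼ h'` iff the vector of absolute values of `h` is
lexicographically at most that of `h'` (distinguished place first). -/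
def preceq {K : Type*} [Field K] [NumberField K] {n : ℕ}
    (w₀ : InfinitePlace K) (w : Fin n → InfinitePlace K) (h h' : K) : Prop :=
  lexLe (absVec w₀ w h) (absVec w₀ w h')

/-- The box `B(𝔟, (t, ℓ)) = {h ∈ 𝔟 : w₀(h) ≤ exp ℓ and wᵢ(h) ≤ exp tᵢ for 1 ≤ i ≤ n}`. -/
def box {K : Type*} [Field K] [NumberField K] {n : ℕ}
    (w₀ : InfinitePlace K) (w : Fin n → InfinitePlace K)
    (𝔟 : FractionalIdeal (𝓞 K)⁰ K) (t : Fin n → ℝ) (ℓ : ℝ) : Set K :=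
  {h : K | h ∈ 𝔟 ∧ w₀ h ≤ Real.exp ℓ ∧ ∀ i : Fin n, w i h ≤ Real.exp (t i)}

/-- A pair `(𝔟, t)` is an *f-representation* if `1 ∈ B(𝔟, (t, 0))` and `1` is a smallest
element of `B(𝔟, (t, 0)) ∖ {0}` with respect to `≼`. -/
def IsFRep {K : Type*} [Field K] [NumberField K] {n : ℕ}
    (w₀ : InfinitePlace K) (w : Fin n → InfinitePlace K)
    (𝔟 : FractionalIdeal (𝓞 K)⁰ K) (t : Fin n → ℝ) : Prop :=
  (1 : K) ∈ box w₀ w 𝔟 t 0 ∧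
  ∀ h ∈ box w₀ w 𝔟 t 0, h ≠ 0 → preceq w₀ w 1 h

theorem lexLe.head_le {m : ℕ} {a b : Fin (m + 1) → ℝ} (hab : lexLe a b) : a 0 ≤ b 0 := by
  rcases hab with rfl | ⟨i, hlt, heq⟩
  · exact le_rfl
  · rcases Fin.eq_zero_or_eq_succ i with rfl | ⟨j, rfl⟩
    · exact hlt.le
    · exact (heq 0 (Fin.succ_pos j)).le

theorem NumberField.InfinitePlace.apply_neg {K : Type*} [Field K] (v : InfinitePlace K) (x : K) :
    v (-x) = v x :=
  v.1.map_neg x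

theorem NumberField.InfinitePlace.IsReal.eq_one_or_eq_neg_one {K : Type*} [Field K]
    {v : InfinitePlace K} (hv : v.IsReal) {x : K} (hx : v x = 1) : x = 1 ∨ x = -1 := by
  have habs : |InfinitePlace.embedding_of_isReal hv x| = 1 := by
    rw [← Real.norm_eq_abs, InfinitePlace.norm_embedding_of_isReal, hx]
  refine (abs_eq zero_le_one).mp habs |>.imp (fun h => ?_) (fun h => ?_) <;>
    apply (InfinitePlace.embedding_of_isReal hv).injective <;> simpa using h

section

variable {K : Type*} [Field K] [NumberField K] {n : ℕ}
  (w₀ : InfinitePlace K) (w : Fin n → InfinitePlace K)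

theorem absVec_neg (h : K) : absVec w₀ w (-h) = absVec w₀ w h := by
  simp only [absVec, InfinitePlace.apply_neg]

theorem preceq_one_neg_one : preceq w₀ w 1 (-1) :=
  Or.inl (absVec_neg w₀ w 1).symm

variable {w₀ w} {𝔟 : FractionalIdeal (𝓞 K)⁰ K} {t : Fin n → ℝ} {ℓ : ℝ}

theorem neg_mem_box {h : K} (hh : h ∈ box w₀ w 𝔟 t ℓ) : -h ∈ box w₀ w 𝔟 t ℓ := by
  obtain ⟨hmem, h₀, hi⟩ := hh
  refine ⟨Submodule.neg_mem _ hmem, ?_, fun i => ?_⟩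
  · rwa [InfinitePlace.apply_neg]
  · rw [InfinitePlace.apply_neg]
    exact hi i

variable (w₀ w 𝔟 t ℓ) in
theorem zero_mem_box : (0 : K) ∈ box w₀ w 𝔟 t ℓ :=
  ⟨𝔟.zero_mem, by simpa using (Real.exp_pos ℓ).le, fun i => by simpa using (Real.exp_pos _).le⟩

theorem IsFRep.apply_eq_one (hf : IsFRep w₀ w 𝔟 t) {h : K} (hh : h ∈ box w₀ w 𝔟 t 0)
    (h0 : h ≠ 0) : w₀ h = 1 := by
  have hle : w₀ 1 ≤ w₀ h := (hf.2 h hh h0).head_le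
  have hge : w₀ h ≤ Real.exp 0 := hh.2.1
  rw [map_one] at hle
  rw [Real.exp_zero] at hge
  exact hge.antisymm hle

end

theorem stmt15_general {K : Type*} [Field K] [NumberField K] {n : ℕ}
    (w₀ : InfinitePlace K) (hw₀ : w₀.IsReal) (w : Fin n → InfinitePlace K)
    (𝔟 : FractionalIdeal (𝓞 K)⁰ K) (t : Fin n → ℝ) :
    IsFRep w₀ w 𝔟 t ↔ box w₀ w 𝔟 t 0 = {-1, 0, 1} := by
  constructor
  · intro hf
    refine Set.Subset.antisymm (fun h hh => ?_) ?_
    · by_cases h0 : h = 0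
      · exact Or.inr (Or.inl h0)
      · rcases hw₀.eq_one_or_eq_neg_one (hf.apply_eq_one hh h0) with h1 | h1
        · exact Or.inr (Or.inr h1)
        · exact Or.inl h1
    · rintro h (rfl | rfl | rfl)
      · exact neg_mem_box hf.1
      · exact zero_mem_box w₀ w 𝔟 t 0
      · exact hf.1
  · intro hbox
    refine ⟨by simp [hbox], fun h hh h0 => ?_⟩
    rw [hbox] at hh
    rcases hh with rfl | rfl | rfl
    · exact preceq_one_neg_one w₀ w
    · exact absurd rfl h0
    · exact Or.inl rfl

/-- Let `K` be a number field whose distinguished infinite place `w₀` is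
real. Then `(𝔟, t)` is an f-representation if and only if `B(𝔟, (t, 0)) = {−1, 0, 1}`. -/
theorem stmt15 {K : Type*} [Field K] [NumberField K] {n : ℕ}
    (w₀ : InfinitePlace K) (hw₀ : w₀.IsReal) (w : Fin n → InfinitePlace K)
    (hw : Function.Bijective (Fin.cons w₀ w : Fin (n + 1) → InfinitePlace K))
    (𝔟 : FractionalIdeal (𝓞 K)⁰ K) (h𝔟 : 𝔟 ≠ 0) (t : Fin n → ℝ) :
    IsFRep w₀ w 𝔟 t ↔ box w₀ w 𝔟 t 0 = {-1, 0, 1} :=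
  stmt15_general w₀ hw₀ w 𝔟 t
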